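/- Let a < b be reals, 𝓘 = [a,b], let ϕ : 𝓘 → ℝ^μ and h : 𝓘 → ℝ^ϰ be measurable with square-integrable components, assume 𝔥 = ∫_𝓘 h hᵀ dτ ≻ 0, set Γ = ∫_𝓘 ϕ hᵀ dτ, ε(τ) = ϕ(τ) − Γ 𝔥⁻¹ h(τ), and assume 𝔈 = ∫_𝓘 εεᵀ dτ ≻ 0. Let R ∈ ℝ^{n×n} be symmetric positive definite. Then for every square-integrable x : 𝓘 → ℝ^n, ∫_𝓘 x(τ)ᵀ R x(τ) dτ ≥ vᵀ (𝔥⁻¹ ⊗ R) v + wᵀ (𝔈⁻¹ ⊗ R) w, where v = ∫_𝓘 (h(τ) ⊗ I_n) x(τ) dτ ∈ ℝ^{ϰn} and w = ∫_𝓘 (ε(τ) ⊗ I_n) x(τ) dτ ∈ ℝ^{μn}. -/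

import Mathlib

open MeasureTheory Matrix Classical
open scoped Kronecker

/-- The Kronecker product `g ⊗ I_n` of a column vector `g ∈ ℝ^κ`
(indexed by `κI`) with the `n × n` identity matrix. -/
noncomputable def vecKronId {κI : Type*} (g : κI → ℝ) (n : ℕ) :
    Matrix (κI × Fin n) (Fin n) ℝ :=
  fun ki j => g ki.1 * (1 : Matrix (Fin n) (Fin n) ℝ) ki.2 j

/-- The entrywise (cross-)Gram integral `∫_{[a,b]} ϕ(τ) h(τ)ᵀ dτ`. -/
noncomputable def gramOn {μI ϰI : Type*} (a b : ℝ) (ϕ : ℝ → μI → ℝ) (h : ℝ → ϰI → ℝ) :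
    Matrix μI ϰI ℝ :=
  fun i j => ∫ τ in Set.Icc a b, ϕ τ i * h τ j

/-- The positive semidefinite square root `√X` of a positive semidefinite
real matrix (junk value `0` if `X` is not positive semidefinite). -/
noncomputable def psdSqrt {m : Type*} [Fintype m] [DecidableEq m] (X : Matrix m m ℝ) :
    Matrix m m ℝ :=
  if hX : X.PosSemidef then
    hX.1.eigenvectorUnitary.1 * diagonal ((RCLike.ofReal : ℝ → ℝ) ∘ Real.sqrt ∘ hX.1.eigenvalues) *
      (star hX.1.eigenvectorUnitary : Matrix m m ℝ)
  else 0

/-!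
View the components of `h`, `ε` and `x` as vectors of `L²(𝓘)`. For any family `g` with
`Gram(g) ≻ 0`, the Gram matrix of the concatenated family `(g, x)` is positive semidefinite, so
its Schur complement `Gram(x) - Vᵀ Gram(g)⁻¹ V` (with `V = ⟪g, x⟫`) is positive semidefinite:
this is Bessel's inequality for the projection of `x` onto the span of `g`. The normal equations
make the residual `ε` orthogonal to `h`, so for `g = (ε, h)` the Gram matrix is
block diagonal `diag(𝔈, 𝔥)` and the Schur complement is
`Gram(x) - V_εᵀ 𝔈⁻¹ V_ε - V_hᵀ 𝔥⁻¹ V_h ⪰ 0`. Both sides of the inequality are entrywise pairings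
of `R` with such matrices, and the entrywise pairing of two positive semidefinite matrices is
nonnegative by the Schur product theorem.
-/

namespace Matrix

section InnerProductSpace

variable {E : Type*} [NormedAddCommGroup E] [InnerProductSpace ℝ E] {ι ι' κ : Type*}

def crossGram (f : ι → E) (g : κ → E) : Matrix ι κ ℝ := of fun i j => inner ℝ (f i) (g j)

lemma gram_sumElim (f : ι → E) (g : κ → E) :
    gram ℝ (Sum.elim f g) =
      fromBlocks (gram ℝ f) (crossGram f g) (crossGram f g)ᵀ (gram ℝ g) := by
  ext (i | i) (j | j) <;> simp [gram, crossGram, real_inner_comm]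

variable [Fintype ι] [Fintype ι'] [DecidableEq ι] [DecidableEq ι']

lemma posSemidef_gram_sub_crossGram_mul_inv_mul [Fintype κ] {f : ι → E}
    (hf : (gram ℝ f).PosDef) (g : κ → E) :
    (gram ℝ g - (crossGram f g)ᵀ * (gram ℝ f)⁻¹ * crossGram f g).PosSemidef := by
  have := hf.isUnit.invertible
  rw [← conjTranspose_eq_transpose_of_trivial, ← PosDef.fromBlocks₁₁ _ _ hf,
    conjTranspose_eq_transpose_of_trivial, ← gram_sumElim]
  exact posSemidef_gram ℝ _

lemma posSemidef_gram_sub_sub_of_crossGram_eq_zero [Fintype κ] {f : ι → E} {g : ι' → E}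
    (hf : (gram ℝ f).PosDef) (hg : (gram ℝ g).PosDef) (hfg : crossGram f g = 0) (x : κ → E) :
    (gram ℝ x - (crossGram f x)ᵀ * (gram ℝ f)⁻¹ * crossGram f x
      - (crossGram g x)ᵀ * (gram ℝ g)⁻¹ * crossGram g x).PosSemidef := by
  have hblock : gram ℝ (Sum.elim f g) = fromBlocks (gram ℝ f) 0 0 (gram ℝ g) := by
    rw [gram_sumElim, hfg, transpose_zero]
  have hpd : (gram ℝ (Sum.elim f g)).PosDef := by
    rw [(posSemidef_gram ℝ _).posDef_iff_isUnit, hblock, isUnit_fromBlocks_zero₂₁]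
    exact ⟨hf.isUnit, hg.isUnit⟩
  have hinv : (gram ℝ (Sum.elim f g))⁻¹ = fromBlocks (gram ℝ f)⁻¹ 0 0 (gram ℝ g)⁻¹ := by
    rw [hblock, inv_fromBlocks_zero₂₁_of_isUnit_iff _ _ _ (iff_of_true hf.isUnit hg.isUnit)]
    simp
  have hcross : crossGram (Sum.elim f g) x = fromRows (crossGram f x) (crossGram g x) := by
    ext (i | i) j <;> rfl
  have := posSemidef_gram_sub_crossGram_mul_inv_mul hpd x
  rwa [hinv, hcross, transpose_fromRows, fromCols_mul_fromBlocks, fromCols_mul_fromRows,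
    Matrix.mul_zero, Matrix.mul_zero, add_zero, zero_add, ← sub_sub] at this

-- The normal equations of the least-squares fit of `ϕ` by `h`.
lemma crossGram_sub_sum_smul_eq_zero {h : ι → E} (hh : IsUnit (gram ℝ h)) (ϕ : κ → E) :
    crossGram (fun l => ϕ l - ∑ k, (crossGram ϕ h * (gram ℝ h)⁻¹) l k • h k) h = 0 := by
  ext l j
  have hΓ : crossGram ϕ h l j = ∑ k, (crossGram ϕ h * (gram ℝ h)⁻¹) l k * gram ℝ h k j := by
    rw [← mul_apply, Matrix.mul_assoc, nonsing_inv_mul _ ((isUnit_iff_isUnit_det _).mp hh),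
      Matrix.mul_one]
  simp only [gram_apply, crossGram, of_apply] at hΓ
  simp only [crossGram, of_apply, zero_apply, inner_sub_left, sum_inner, real_inner_smul_left,
    ← hΓ, sub_self]

end InnerProductSpace

variable {ι κ : Type*} [Fintype ι] [Fintype κ]

lemma PosSemidef.sum_sum_mul_nonneg {A B : Matrix ι ι ℝ} (hA : A.PosSemidef)
    (hB : B.PosSemidef) : 0 ≤ ∑ i, ∑ j, A i j * B i j := by
  simpa [dotProduct, mulVec] using (hA.hadamard hB).dotProduct_mulVec_nonneg 1

lemma dotProduct_kronecker_mulVec {R : Type*} [CommSemiring R] (A : Matrix ι ι R)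
    (B : Matrix κ κ R) (V : Matrix ι κ R) :
    (fun p : ι × κ => V p.1 p.2) ⬝ᵥ (A ⊗ₖ B) *ᵥ (fun p => V p.1 p.2)
      = ∑ i, ∑ j, B i j * (Vᵀ * A * V) i j := by
  simp only [dotProduct, mulVec, kroneckerMap_apply, mul_apply, transpose_apply,
    Fintype.sum_prod_type, Finset.mul_sum, Finset.sum_mul]
  rw [Finset.sum_comm]
  refine Finset.sum_congr rfl fun i _ => ?_
  simp_rw [Finset.sum_comm (γ := κ)]
  rw [Finset.sum_comm]
  exact Finset.sum_congr rfl fun l _ => Finset.sum_congr rfl fun k _ =>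
    Finset.sum_congr rfl fun j _ => by ring

end Matrix

namespace MeasureTheory

variable {α ι κ : Type*} [MeasurableSpace α] {ν : Measure α}

lemma MemLp.inner_toLp_toLp {f g : α → ℝ} (hf : MemLp f 2 ν) (hg : MemLp g 2 ν) :
    inner ℝ (hf.toLp f) (hg.toLp g) = ∫ a, f a * g a ∂ν := by
  rw [L2.inner_def]
  refine integral_congr_ae ?_
  filter_upwards [hf.coeFn_toLp, hg.coeFn_toLp] with a hfa hga
  simp [hfa, hga, mul_comm]

lemma MemLp.crossGram_toLp {f : α → ι → ℝ} {g : α → κ → ℝ}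
    (hf : ∀ i, MemLp (fun a => f a i) 2 ν) (hg : ∀ j, MemLp (fun a => g a j) 2 ν) :
    crossGram (fun i => (hf i).toLp _) (fun j => (hg j).toLp _)
      = of fun i j => ∫ a, f a i * g a j ∂ν := by
  ext i j
  exact MemLp.inner_toLp_toLp _ _

lemma MemLp.toLp_sum_smul {E : Type*} [NormedAddCommGroup E] [NormedSpace ℝ E] {p : ENNReal}
    (s : Finset ι) (c : ι → ℝ) {g : ι → α → E} (hg : ∀ i, MemLp (g i) p ν)
    (h : MemLp (fun a => ∑ i ∈ s, c i • g i a) p ν) :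
    h.toLp _ = ∑ i ∈ s, c i • (hg i).toLp (g i) := by
  induction s using Finset.induction_on with
  | empty => simp only [Finset.sum_empty]; rfl
  | insert i s hi ih =>
    have hs : MemLp (fun a => ∑ j ∈ s, c j • g j a) p ν :=
      memLp_finsetSum s fun j _ => (hg j).const_smul (c j)
    rw [Finset.sum_insert hi, ← ih hs, ← MemLp.toLp_const_smul, ← MemLp.toLp_add]
    exact MemLp.toLp_congr _ _ (.of_forall fun a => by simp [Finset.sum_insert hi])

lemma integral_vecKronId_mulVec {n : ℕ} {g : α → ι → ℝ} {x : α → Fin n → ℝ}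
    (hg : ∀ k, MemLp (fun a => g a k) 2 ν) (hx : ∀ i, MemLp (fun a => x a i) 2 ν) :
    (fun p => ∫ a, (vecKronId (g a) n *ᵥ x a) p ∂ν)
      = fun p => crossGram (fun k => (hg k).toLp _) (fun i => (hx i).toLp _) p.1 p.2 := by
  funext ⟨k, i⟩
  rw [MemLp.crossGram_toLp]
  simp [vecKronId, mulVec, dotProduct, one_apply]

variable [Fintype ι] {p : ENNReal} {ϕ : α → κ → ℝ} {h : α → ι → ℝ}

lemma memLp_sub_mulVec (hϕ : ∀ l, MemLp (fun a => ϕ a l) p ν)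
    (hh : ∀ k, MemLp (fun a => h a k) p ν) (M : Matrix κ ι ℝ) (l : κ) :
    MemLp (fun a => (ϕ a - M *ᵥ h a) l) p ν :=
  (hϕ l).sub (memLp_finsetSum _ fun k _ => (hh k).const_mul (M l k))

lemma MemLp.toLp_sub_mulVec (hϕ : ∀ l, MemLp (fun a => ϕ a l) p ν)
    (hh : ∀ k, MemLp (fun a => h a k) p ν) (M : Matrix κ ι ℝ) (l : κ) :
    (memLp_sub_mulVec hϕ hh M l).toLp _ = (hϕ l).toLp _ - ∑ k, M l k • (hh k).toLp _ := by
  rw [← MemLp.toLp_sum_smul _ _ hh (memLp_finsetSum _ fun k _ => (hh k).const_mul (M l k))]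
  rfl

lemma integral_dotProduct_mulVec {x : α → ι → ℝ} (hx : ∀ i, MemLp (fun a => x a i) 2 ν)
    (R : Matrix ι ι ℝ) :
    ∫ a, x a ⬝ᵥ R *ᵥ x a ∂ν = ∑ i, ∑ j, R i j * gram ℝ (fun i => (hx i).toLp _) i j := by
  have hint : ∀ i j, Integrable (fun a => x a i * x a j) ν :=
    fun i j => (hx i).integrable_mul (hx j)
  calc ∫ a, x a ⬝ᵥ R *ᵥ x a ∂ν = ∫ a, ∑ i, ∑ j, R i j * (x a i * x a j) ∂ν := by
        congr 1 with a
        simp only [dotProduct, mulVec, Finset.mul_sum]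
        exact Finset.sum_congr rfl fun i _ => Finset.sum_congr rfl fun j _ => by ring
    _ = ∑ i, ∑ j, R i j * ∫ a, x a i * x a j ∂ν := by
        rw [integral_finsetSum _ fun i _ =>
          integrable_finsetSum _ fun j _ => (hint i j).const_mul (R i j)]
        refine Finset.sum_congr rfl fun i _ => ?_
        rw [integral_finsetSum _ fun j _ => (hint i j).const_mul (R i j)]
        simp only [integral_const_mul]
    _ = _ := by simp only [gram_apply, MemLp.inner_toLp_toLp]

end MeasureTheory

theorem refined_leastSquares_integral_inequality_general
    (μ ϰ n : ℕ) (a b : ℝ)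
    (ϕ : ℝ → Fin μ → ℝ) (h : ℝ → Fin ϰ → ℝ)
    (hϕL2 : ∀ i, MemLp (fun τ => ϕ τ i) 2 (volume.restrict (Set.Icc a b)))
    (hhL2 : ∀ i, MemLp (fun τ => h τ i) 2 (volume.restrict (Set.Icc a b)))
    (𝔥 : Matrix (Fin ϰ) (Fin ϰ) ℝ) (h𝔥 : 𝔥 = gramOn a b h h) (h𝔥pd : 𝔥.PosDef)
    (Γ : Matrix (Fin μ) (Fin ϰ) ℝ) (hΓ : Γ = gramOn a b ϕ h)
    (ε : ℝ → Fin μ → ℝ) (hε : ∀ τ, ε τ = ϕ τ - (Γ * 𝔥⁻¹) *ᵥ h τ)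
    (𝔈 : Matrix (Fin μ) (Fin μ) ℝ) (h𝔈 : 𝔈 = gramOn a b ε ε) (h𝔈pd : 𝔈.PosDef)
    (R : Matrix (Fin n) (Fin n) ℝ) (hR : R.PosDef)
    (x : ℝ → Fin n → ℝ)
    (hxL2 : ∀ i, MemLp (fun τ => x τ i) 2 (volume.restrict (Set.Icc a b)))
    (v : Fin ϰ × Fin n → ℝ)
    (hv : v = fun j => ∫ τ in Set.Icc a b, (vecKronId (h τ) n *ᵥ x τ) j)
    (w : Fin μ × Fin n → ℝ)
    (hw : w = fun j => ∫ τ in Set.Icc a b, (vecKronId (ε τ) n *ᵥ x τ) j) :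
    v ⬝ᵥ ((𝔥⁻¹ ⊗ₖ R) *ᵥ v) + w ⬝ᵥ ((𝔈⁻¹ ⊗ₖ R) *ᵥ w) ≤
      ∫ τ in Set.Icc a b, x τ ⬝ᵥ (R *ᵥ x τ) := by
  obtain rfl : ε = _ := funext hε
  subst hv hw
  have hεL2 := memLp_sub_mulVec hϕL2 hhL2 (Γ * 𝔥⁻¹)
  set hL := fun k => (hhL2 k).toLp _
  set ϕL := fun l => (hϕL2 l).toLp _
  set xL := fun i => (hxL2 i).toLp _
  set εL := fun l => (hεL2 l).toLp _
  have h𝔥_gram : 𝔥 = gram ℝ hL := h𝔥.trans (MemLp.crossGram_toLp hhL2 hhL2).symm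
  have hΓ_crossGram : Γ = crossGram ϕL hL := hΓ.trans (MemLp.crossGram_toLp hϕL2 hhL2).symm
  have h𝔈_gram : 𝔈 = gram ℝ εL := h𝔈.trans (MemLp.crossGram_toLp hεL2 hεL2).symm
  have hεL : εL = fun l => ϕL l - ∑ k, (crossGram ϕL hL * (gram ℝ hL)⁻¹) l k • hL k := by
    rw [← hΓ_crossGram, ← h𝔥_gram]
    exact funext (MemLp.toLp_sub_mulVec hϕL2 hhL2 _)
  have hschur := posSemidef_gram_sub_sub_of_crossGram_eq_zero (h𝔈_gram ▸ h𝔈pd)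
    (h𝔥_gram ▸ h𝔥pd) (hεL ▸ crossGram_sub_sum_smul_eq_zero (h𝔥_gram ▸ h𝔥pd.isUnit) ϕL) xL
  rw [← h𝔥_gram, ← h𝔈_gram] at hschur
  have hpair := hR.posSemidef.sum_sum_mul_nonneg hschur
  rw [integral_vecKronId_mulVec hhL2 hxL2, integral_vecKronId_mulVec hεL2 hxL2,
    dotProduct_kronecker_mulVec, dotProduct_kronecker_mulVec, integral_dotProduct_mulVec hxL2]
  simp only [Matrix.sub_apply, mul_sub, Finset.sum_sub_distrib] at hpair
  linarith

/-- **refined least-squares integral inequality.**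
With residual `ε = ϕ − Γ 𝔥⁻¹ h` and error Gram `𝔈 = ∫ ε εᵀ ≻ 0`:
`∫ x(τ)ᵀ R x(τ) dτ ≥ vᵀ (𝔥⁻¹ ⊗ R) v + wᵀ (𝔈⁻¹ ⊗ R) w` where
`v = ∫ (h(τ) ⊗ Iₙ) x(τ) dτ` and `w = ∫ (ε(τ) ⊗ Iₙ) x(τ) dτ`. -/
theorem refined_leastSquares_integral_inequality
    (μ ϰ n : ℕ) (a b : ℝ) (hab : a < b)
    (ϕ : ℝ → Fin μ → ℝ) (h : ℝ → Fin ϰ → ℝ)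
    (hϕmeas : ∀ i, Measurable fun τ => ϕ τ i)
    (hhmeas : ∀ i, Measurable fun τ => h τ i)
    (hϕL2 : ∀ i, MemLp (fun τ => ϕ τ i) 2 (volume.restrict (Set.Icc a b)))
    (hhL2 : ∀ i, MemLp (fun τ => h τ i) 2 (volume.restrict (Set.Icc a b)))
    (𝔥 : Matrix (Fin ϰ) (Fin ϰ) ℝ) (h𝔥 : 𝔥 = gramOn a b h h) (h𝔥pd : 𝔥.PosDef)
    (Γ : Matrix (Fin μ) (Fin ϰ) ℝ) (hΓ : Γ = gramOn a b ϕ h)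
    (ε : ℝ → Fin μ → ℝ) (hε : ∀ τ, ε τ = ϕ τ - (Γ * 𝔥⁻¹) *ᵥ h τ)
    (𝔈 : Matrix (Fin μ) (Fin μ) ℝ) (h𝔈 : 𝔈 = gramOn a b ε ε) (h𝔈pd : 𝔈.PosDef)
    (R : Matrix (Fin n) (Fin n) ℝ) (hR : R.PosDef)
    (x : ℝ → Fin n → ℝ)
    (hxmeas : ∀ i, Measurable fun τ => x τ i)
    (hxL2 : ∀ i, MemLp (fun τ => x τ i) 2 (volume.restrict (Set.Icc a b)))
    (v : Fin ϰ × Fin n → ℝ)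
    (hv : v = fun j => ∫ τ in Set.Icc a b, (vecKronId (h τ) n *ᵥ x τ) j)
    (w : Fin μ × Fin n → ℝ)
    (hw : w = fun j => ∫ τ in Set.Icc a b, (vecKronId (ε τ) n *ᵥ x τ) j) :
    v ⬝ᵥ ((𝔥⁻¹ ⊗ₖ R) *ᵥ v) + w ⬝ᵥ ((𝔈⁻¹ ⊗ₖ R) *ᵥ w) ≤
      ∫ τ in Set.Icc a b, x τ ⬝ᵥ (R *ᵥ x τ) :=
  refined_leastSquares_integral_inequality_general μ ϰ n a b ϕ h hϕL2 hhL2 𝔥 h𝔥 h𝔥pd Γ hΓ ε hε 𝔈 h𝔈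
    h𝔈pd R hR x hxL2 v hv w hw
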